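/- Let {v_0,...,v_{2n}} be a uniform balanced configuration with m = 2n+1. Then there is a well-defined map φ from the set of 2-element subsets of {0,...,2n} to {0,...,2n} such that det(v_{φ({k,l})}, v_k) = -det(v_{φ({k,l})}, v_l) for every pair {k,l}; moreover for each i, the pairs {k,l} with φ({k,l}) = i form a partition of {0,...,2n} \ {i} into n pairs. -/

import Mathlib

noncomputable section
open Real Finset

/-- Determinant of two plane vectors, identifying `ℝ²` with `ℂ`: `det(z,w) = Im(z̄·w)`. -/
def cdet (z w : ℂ) : ℝ := z.re * w.im - z.im * w.re

/-- A configuration is balanced if for every index `i` and every real `x`, the number of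
indices `j ≠ i` with `cdet (v i) (v j) = x` equals the number with value `-x`. -/
def BalancedConfig {m : ℕ} (v : Fin m → ℂ) : Prop :=
  ∀ i : Fin m, ∀ x : ℝ,
    {j : Fin m | j ≠ i ∧ cdet (v i) (v j) = x}.ncard =
    {j : Fin m | j ≠ i ∧ cdet (v i) (v j) = -x}.ncard

/-- A configuration is uniform if every pair of distinct vectors is linearly independent
over `ℝ`. -/
def UniformConfig {m : ℕ} (v : Fin m → ℂ) : Prop :=
  ∀ i j : Fin m, i ≠ j → LinearIndependent ℝ ![v i, v j]

lemma cdet_identity (a b c : ℂ) :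
    (cdet a b : ℂ) * c + (cdet b c : ℂ) * a = (cdet a c : ℂ) * b := by
  simp [cdet, Complex.ext_iff, Complex.mul_re, Complex.mul_im]
  constructor <;> ring

lemma cdet_add_right (z a b : ℂ) : cdet z (a + b) = cdet z a + cdet z b := by
  simp [cdet]; ring

lemma cdet_ne_zero_of_li {z w : ℂ} (h : LinearIndependent ℝ ![z, w]) : cdet z w ≠ 0 := by
  intro h0
  rw [LinearIndependent.pair_iff] at h
  rcases eq_or_ne z 0 with hz | hz
  · have := (h 1 0 (by simp [hz])).1; norm_num at this
  · have hz' : z.re ≠ 0 ∨ z.im ≠ 0 := by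
      by_contra hc; push_neg at hc; exact hz (Complex.ext hc.1 hc.2)
    have hd : z.re * w.im = z.im * w.re := by
      simp [cdet] at h0; linarith
    rcases hz' with hre | him
    · have := (h w.re (-z.re) (by
        apply Complex.ext <;>
          simp [Complex.real_smul, Complex.mul_re, Complex.mul_im] <;> nlinarith)).2
      simp at this; exact hre this
    · have := (h w.im (-z.im) (by
        apply Complex.ext <;>
          simp [Complex.real_smul, Complex.mul_re, Complex.mul_im] <;> nlinarith)).2
      simp at this; exact him this

theorem pairing_map_exists (n : ℕ) (hn : 1 ≤ n)
    (v : Fin (2 * n + 1) → ℂ)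
    (hbal : BalancedConfig v) (hunif : UniformConfig v) :
    ∃ φ : Fin (2 * n + 1) → Fin (2 * n + 1) → Fin (2 * n + 1),
      (∀ k l, k ≠ l → φ k l = φ l k ∧
        cdet (v (φ k l)) (v k) = - cdet (v (φ k l)) (v l)) ∧
      (∀ i j, j ≠ i → ∃! l, l ≠ i ∧ l ≠ j ∧ φ j l = i) := by
  classical
  -- nondegeneracy
  have hf0 : ∀ {i j : Fin (2 * n + 1)}, i ≠ j → cdet (v i) (v j) ≠ 0 := fun {i j} h =>
    cdet_ne_zero_of_li (hunif i j h)
  -- balanced, in Finset form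
  have hbal' : ∀ (i : Fin (2 * n + 1)) (x : ℝ),
      (univ.filter fun j => j ≠ i ∧ cdet (v i) (v j) = x).card =
      (univ.filter fun j => j ≠ i ∧ cdet (v i) (v j) = -x).card := by
    intro i x
    have h := hbal i x
    rw [show {j : Fin (2 * n + 1) | j ≠ i ∧ cdet (v i) (v j) = x} =
        ↑(univ.filter fun j => j ≠ i ∧ cdet (v i) (v j) = x) by ext j; simp,
      show {j : Fin (2 * n + 1) | j ≠ i ∧ cdet (v i) (v j) = -x} =
        ↑(univ.filter fun j => j ≠ i ∧ cdet (v i) (v j) = -x) by ext j; simp,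
      Set.ncard_coe_finset, Set.ncard_coe_finset] at h
    exact h
  -- the pairing property
  set Q : Fin (2 * n + 1) → Fin (2 * n + 1) → Fin (2 * n + 1) → Prop :=
    fun i k l => k ≠ i ∧ l ≠ i ∧ cdet (v i) (v k) = - cdet (v i) (v l) with hQ
  -- uniqueness of the apex i for a given pair
  have huniq : ∀ {i i' k l : Fin (2 * n + 1)}, k ≠ l → Q i k l → Q i' k l → i = i' := by
    intro i i' k l hkl hq1 hq2
    simp only [hQ] at hq1 hq2
    obtain ⟨hki, hli, hi⟩ := hq1
    obtain ⟨hki', hli', hi'⟩ := hq2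
    by_contra hne
    have hu0 : v k + v l ≠ 0 := by
      intro h0
      have hl : v l = -(v k) := eq_neg_of_add_eq_zero_right h0
      apply hf0 hkl
      simp [cdet, hl]
      ring
    have h1 : cdet (v i) (v k + v l) = 0 := by rw [cdet_add_right]; linarith
    have h2 : cdet (v i') (v k + v l) = 0 := by rw [cdet_add_right]; linarith
    have hid := cdet_identity (v i) (v i') (v k + v l)
    rw [h1, h2] at hid
    simp at hid
    rcases hid with hid | hid
    · exact hf0 hne hid
    · exact hu0 hid
  -- the per-element fiber sets
  set B : Fin (2 * n + 1) → Fin (2 * n + 1) → Finset (Fin (2 * n + 1)) :=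
    fun i k => univ.filter (fun l => l ≠ i ∧ cdet (v i) (v l) = - cdet (v i) (v k)) with hB
  have hBone : ∀ (i k : Fin (2 * n + 1)), k ≠ i → 1 ≤ (B i k).card := by
    intro i k hki
    rw [hB]
    dsimp only
    rw [← hbal' i (cdet (v i) (v k))]
    apply Finset.card_pos.mpr
    exact ⟨k, by simp [hki]⟩
  -- the pair sets
  set S : Fin (2 * n + 1) → Finset (Fin (2 * n + 1) × Fin (2 * n + 1)) :=
    fun i => univ.offDiag.filter (fun p => Q i p.1 p.2) with hS
  -- fiberwise card of S i
  have hScard : ∀ i, (S i).card = ∑ k ∈ univ.erase i, (B i k).card := by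
    intro i
    rw [Finset.card_eq_sum_card_fiberwise
      (f := Prod.fst) (t := univ.erase i) ?ha]
    · apply Finset.sum_congr rfl
      intro k hk
      have hki : k ≠ i := (Finset.mem_erase.mp hk).1
      have hset : (S i).filter (fun p => p.1 = k) = (B i k).image (fun l => (k, l)) := by
        ext ⟨a, b⟩
        simp only [hS, hB, hQ, Finset.mem_filter, Finset.mem_image, Finset.mem_offDiag,
          Finset.mem_univ, true_and]
        constructor
        · rintro ⟨⟨hab, hai, hbi, hdet⟩, rfl⟩
          exact ⟨b, ⟨hbi, by linarith⟩, rfl⟩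
        · rintro ⟨c, ⟨hci, hdet⟩, heq⟩
          have h1 : k = a := congrArg Prod.fst heq
          have h2 : c = b := congrArg Prod.snd heq
          subst h1; subst h2
          have hkb : k ≠ c := by
            intro h
            apply hf0 hki.symm
            rw [← h] at hdet
            linarith
          exact ⟨⟨hkb, hki, hci, by linarith⟩, rfl⟩
      rw [hset, Finset.card_image_of_injective _ (fun x y hxy => by simpa using hxy)]
    · intro p hp
      rw [hS] at hp
      simp only [Finset.mem_coe, Finset.coe_filter, Set.mem_setOf_eq, Finset.mem_filter] at hp
      have := hp.2
      simp only [hQ] at this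
      exact Finset.mem_erase.mpr ⟨this.1, Finset.mem_univ _⟩
  -- lower bound
  have hSlow : ∀ i, 2 * n ≤ (S i).card := by
    intro i
    rw [hScard i]
    calc 2 * n = (univ.erase i).card := by
          rw [Finset.card_erase_of_mem (Finset.mem_univ i), Finset.card_univ,
            Fintype.card_fin]
          omega
      _ = ∑ k ∈ univ.erase i, 1 := by simp
      _ ≤ ∑ k ∈ univ.erase i, (B i k).card :=
          Finset.sum_le_sum (fun k hk => hBone i k (Finset.mem_erase.mp hk).1)
  -- disjointness
  have hdisj : ∀ i ∈ (univ : Finset (Fin (2 * n + 1))),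
      ∀ i' ∈ (univ : Finset (Fin (2 * n + 1))),
      i ≠ i' → Disjoint (S i) (S i') := by
    intro i _ i' _ hne
    rw [Finset.disjoint_left]
    intro p hp hp'
    rw [hS] at hp hp'
    simp only [Finset.mem_filter, Finset.mem_offDiag] at hp hp'
    exact hne (huniq hp.1.2.2 hp.2 hp'.2)
  have hsub : univ.biUnion S ⊆ univ.offDiag := by
    intro p hp
    rcases Finset.mem_biUnion.mp hp with ⟨i, _, hpi⟩
    rw [hS] at hpi
    exact Finset.filter_subset _ _ hpi
  have hoff : (univ : Finset (Fin (2 * n + 1))).offDiag.card = (2 * n + 1) * (2 * n) := by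
    rw [Finset.offDiag_card, Finset.card_univ, Fintype.card_fin]
    have h : (2 * n + 1) * (2 * n + 1) = (2 * n + 1) * (2 * n) + (2 * n + 1) := by ring
    omega
  have hsum_le : ∑ i ∈ univ, (S i).card ≤ (2 * n + 1) * (2 * n) := by
    rw [← Finset.card_biUnion hdisj, ← hoff]
    exact Finset.card_le_card hsub
  have hconst : ∑ _i ∈ (univ : Finset (Fin (2 * n + 1))), 2 * n = (2 * n + 1) * (2 * n) := by
    rw [Finset.sum_const, Finset.card_univ, Fintype.card_fin, smul_eq_mul]
  have hsum_ge : (2 * n + 1) * (2 * n) ≤ ∑ i ∈ univ, (S i).card := by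
    rw [← hconst]
    exact Finset.sum_le_sum (fun i _ => hSlow i)
  have hsum_eq : ∑ i ∈ univ, (S i).card = (2 * n + 1) * (2 * n) :=
    le_antisymm hsum_le hsum_ge
  -- coverage
  have hcover : univ.biUnion S = univ.offDiag := by
    apply Finset.eq_of_subset_of_card_le hsub
    rw [hoff, Finset.card_biUnion hdisj, hsum_eq]
  -- each S i has exactly 2n elements
  have hSeq : ∀ i, (S i).card = 2 * n := by
    intro i
    by_contra hne
    have hlt : 2 * n < (S i).card := lt_of_le_of_ne (hSlow i) (Ne.symm hne)
    have h2 : ∑ _i ∈ (univ : Finset (Fin (2 * n + 1))), 2 * n < ∑ i ∈ univ, (S i).card :=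
      Finset.sum_lt_sum (fun j _ => hSlow j) ⟨i, Finset.mem_univ i, hlt⟩
    rw [hsum_eq, hconst] at h2
    exact lt_irrefl _ h2
  -- each B i k is a singleton
  have hBcard : ∀ (i k : Fin (2 * n + 1)), k ≠ i → (B i k).card = 1 := by
    intro i k hki
    by_contra hne
    have hlt : 1 < (B i k).card := lt_of_le_of_ne (hBone i k hki) (Ne.symm hne)
    have h1 : ∑ j ∈ univ.erase i, 1 < ∑ j ∈ univ.erase i, (B i j).card :=
      Finset.sum_lt_sum (fun j hj => hBone i j (Finset.mem_erase.mp hj).1)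
        ⟨k, Finset.mem_erase.mpr ⟨hki, Finset.mem_univ k⟩, hlt⟩
    rw [← hScard i, hSeq i, Finset.sum_const, smul_eq_mul, mul_one,
      Finset.card_erase_of_mem (Finset.mem_univ i), Finset.card_univ, Fintype.card_fin] at h1
    omega
  -- existence and uniqueness of apex for each pair
  have hEU : ∀ k l : Fin (2 * n + 1), k ≠ l → ∃! i, Q i k l := by
    intro k l hkl
    have hmem : (k, l) ∈ univ.offDiag := by simp [Finset.mem_offDiag, hkl]
    rw [← hcover] at hmem
    rcases Finset.mem_biUnion.mp hmem with ⟨i, _, hpi⟩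
    rw [hS] at hpi
    have hQi : Q i k l := (Finset.mem_filter.mp hpi).2
    exact ⟨i, hQi, fun i' hQi' => huniq hkl hQi' hQi⟩
  -- define φ
  refine ⟨fun k l => if h : k ≠ l then (hEU k l h).choose else k, ?_, ?_⟩
  · intro k l hkl
    have hlk : l ≠ k := hkl.symm
    have h1 : Q (hEU k l hkl).choose k l := (hEU k l hkl).choose_spec.1
    have h2 : Q (hEU l k hlk).choose l k := (hEU l k hlk).choose_spec.1
    simp only [hQ] at h1 h2
    have h2' : Q (hEU l k hlk).choose k l := by
      simp only [hQ]
      exact ⟨h2.2.1, h2.1, by linarith [h2.2.2]⟩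
    constructor
    · show (if h : k ≠ l then (hEU k l h).choose else k) =
        (if h : l ≠ k then (hEU l k h).choose else l)
      rw [dif_pos hkl, dif_pos hlk]
      exact ((hEU k l hkl).choose_spec.2 _ h2').symm
    · show cdet (v (if h : k ≠ l then (hEU k l h).choose else k)) (v k) =
        - cdet (v (if h : k ≠ l then (hEU k l h).choose else k)) (v l)
      rw [dif_pos hkl]
      exact h1.2.2
  · intro i j hji
    obtain ⟨l0, hl0⟩ := Finset.card_eq_one.mp (hBcard i j hji)
    have hl0mem : l0 ∈ B i j := by rw [hl0]; exact Finset.mem_singleton_self l0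
    rw [hB] at hl0mem
    simp only [Finset.mem_filter, Finset.mem_univ, true_and] at hl0mem
    have hl0i : l0 ≠ i := hl0mem.1
    have hl0j : l0 ≠ j := by
      intro h
      apply hf0 hji.symm
      rw [h] at hl0mem
      linarith [hl0mem.2]
    have hjl0 : j ≠ l0 := hl0j.symm
    refine ⟨l0, ⟨hl0i, hl0j, ?_⟩, ?_⟩
    · show (if h : j ≠ l0 then (hEU j l0 h).choose else j) = i
      rw [dif_pos hjl0]
      have hQi : Q i j l0 := by
        simp only [hQ]
        exact ⟨hji, hl0i, by linarith [hl0mem.2]⟩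
      exact ((hEU j l0 hjl0).choose_spec.2 i hQi).symm
    · rintro y ⟨hyi, hyj, hy⟩
      have hjy : j ≠ y := hyj.symm
      have hy' : (if h : j ≠ y then (hEU j y h).choose else j) = i := hy
      rw [dif_pos hjy] at hy'
      have hQy : Q i j y := hy' ▸ (hEU j y hjy).choose_spec.1
      simp only [hQ] at hQy
      have hyB : y ∈ B i j := by
        rw [hB]
        simp only [Finset.mem_filter, Finset.mem_univ, true_and]
        exact ⟨hyi, by linarith [hQy.2.2]⟩
      rw [hl0] at hyB
      exact Finset.mem_singleton.mp hyB
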